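/- Let G and H be graphs with adjacency matrices A and B, and let P be a balanced weight-equitable joint partition of G and H such that the weight ν is constant on each cell of P. Then A and B are fractionally isomorphic. -/

import Mathlib

/-!
Let `c` send each vertex to its cell. Since `ν` is constant on cells and nowhere zero, the
weight-intersection numbers are the ordinary cell degrees `∑_{v ∈ C_j} A u v` rescaled by
`ν(C_j) / ν(u)`, with `ν(u)` constant on the cell of `u`; so the partition is equitable in the
ordinary sense. The averaging matrix `X` of the partition (entry `1 / |C|` inside each cell `C`,
zero elsewhere) is doubly stochastic, and for an equitable partition of a symmetric matrix it
commutes with `A`: double counting the edges between two cells gives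
`|C_j| · deg(w, C_i) = |C_i| · deg(u, C_j)`. Take `X = Y`; because the partition is balanced,
every vertex of `G` shares a cell with a vertex of `H` and vice versa.
-/

open Finset

open scoped Classical in
/-- The weight-intersection number of `u` with respect to the cell `D`. -/
noncomputable def wIntC {α : Type*} (G : SimpleGraph α) (ν : α → ℝ) (D : Finset α)
    (u : α) : ℝ :=
  (∑ v ∈ D, if G.Adj u v then ν v else 0) / ν u

/-- `Vc` lists the cells of a partition of the vertex set. -/
def IsPartitionC {α : Type*} {m : ℕ} (Vc : Fin m → Finset α) : Prop :=
  ∀ v : α, ∃! i : Fin m, v ∈ Vc i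

/-- The partition with cells `Vc` is weight-equitable w.r.t. weights `ν`. -/
def IsWeightEquitableC {α : Type*} (G : SimpleGraph α) (ν : α → ℝ)
    {m : ℕ} (Vc : Fin m → Finset α) : Prop :=
  ∀ i j : Fin m, ∀ u ∈ Vc i, ∀ u' ∈ Vc i, wIntC G ν (Vc j) u = wIntC G ν (Vc j) u'

/-- A matrix is doubly stochastic: nonnegative with all row and column sums one. -/
def IsDoublyStochastic {α : Type*} [Fintype α] (X : Matrix α α ℝ) : Prop :=
  (∀ i j, 0 ≤ X i j) ∧ X.mulVec (fun _ => 1) = (fun _ => 1) ∧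
    Matrix.vecMul (fun _ => 1) X = (fun _ => 1)

section FiberPartition

variable {α ι : Type*}

theorem wIntC_eq_of_forall_mem_eq (G : SimpleGraph α) [DecidableRel G.Adj] {ν : α → ℝ}
    {D : Finset α} {a : ℝ} (hD : ∀ v ∈ D, ν v = a) (u : α) :
    wIntC G ν D u = a * (∑ v ∈ D, G.adjMatrix ℝ u v) / ν u := by
  rw [wIntC, mul_sum]
  congr 1
  refine sum_congr rfl fun v hv => ?_
  by_cases huv : G.Adj u v <;> simp [huv, hD v hv]

variable [Fintype α]

theorem IsPartitionC.exists_eq_fiber {m : ℕ} {Vc : Fin m → Finset α} (h : IsPartitionC Vc) :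
    ∃ c : α → Fin m, Vc = fun i => ({v | c v = i} : Finset α) := by
  choose c hc huniq using h
  refine ⟨c, funext fun i => ?_⟩
  ext v
  simp only [mem_filter, mem_univ, true_and]
  exact ⟨fun hv => (huniq v i hv).symm, fun hv => hv ▸ hc v⟩

variable [DecidableEq ι]

def IsEquitable (A : Matrix α α ℝ) (c : α → ι) : Prop :=
  ∀ u u', c u = c u' → ∀ j, ∑ v with c v = j, A u v = ∑ v with c v = j, A u' v

theorem isEquitable_adjMatrix_of_isWeightEquitableC {m : ℕ} (G : SimpleGraph α)
    [DecidableRel G.Adj] {ν : α → ℝ} (hν : ∀ x, ν x ≠ 0) (c : α → Fin m)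
    (hWE : IsWeightEquitableC G ν fun i => {v | c v = i})
    (hconst : ∀ x y, c x = c y → ν x = ν y) :
    IsEquitable (G.adjMatrix ℝ) c := by
  intro u u' hu j
  by_cases hj : ∃ w, c w = j
  · obtain ⟨w, rfl⟩ := hj
    have hcell : ∀ v ∈ ({v | c v = c w} : Finset α), ν v = ν w := fun v hv =>
      hconst v w (mem_filter.mp hv).2
    have h := hWE (c u) (c w) u (by simp) u' (by simp [hu])
    rw [wIntC_eq_of_forall_mem_eq G hcell, wIntC_eq_of_forall_mem_eq G hcell,
      hconst u u' hu] at h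
    exact mul_left_cancel₀ (hν w) ((div_left_inj' (hν u')).mp h)
  · simp only [not_exists] at hj
    simp [hj]

noncomputable def fiberAvg (c : α → ι) : Matrix α α ℝ :=
  Matrix.of fun u v => if c u = c v then (#{w | c w = c u} : ℝ)⁻¹ else 0

theorem fiberAvg_comm (c : α → ι) (u v : α) : fiberAvg c u v = fiberAvg c v u := by
  by_cases h : c u = c v <;> simp [fiberAvg, h, eq_comm]

theorem fiberAvg_apply_ne_zero {c : α → ι} {u v : α} (h : c u = c v) : fiberAvg c u v ≠ 0 := by
  simp [fiberAvg, h]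

theorem sum_fiberAvg_mul (c : α → ι) (u : α) (f : α → ℝ) :
    ∑ v, fiberAvg c u v * f v = (#{w | c w = c u} : ℝ)⁻¹ * ∑ v with c v = c u, f v := by
  rw [mul_sum, sum_filter]
  refine sum_congr rfl fun v _ => ?_
  by_cases h : c u = c v <;> simp [fiberAvg, h, eq_comm]

theorem sum_fiberAvg_row (c : α → ι) (u : α) : ∑ v, fiberAvg c u v = 1 := by
  have hcard : (0 : ℝ) < #{w | c w = c u} := by exact_mod_cast card_pos.mpr ⟨u, by simp⟩
  simpa [hcard.ne'] using sum_fiberAvg_mul c u 1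

theorem isDoublyStochastic_fiberAvg (c : α → ι) : IsDoublyStochastic (fiberAvg c) := by
  refine ⟨fun u v => ?_, funext fun u => ?_, funext fun v => ?_⟩
  · simp only [fiberAvg, Matrix.of_apply]
    split_ifs <;> positivity
  · simpa [Matrix.mulVec, dotProduct] using sum_fiberAvg_row c u
  · simpa [Matrix.vecMul, dotProduct, fiberAvg_comm c _ v] using sum_fiberAvg_row c v

section Equitable

variable {A : Matrix α α ℝ} {c : α → ι}

theorem IsEquitable.sum_fiber_eq_card_mul (hA : IsEquitable A c) (u : α) (j : ι) :
    ∑ x with c x = c u, ∑ v with c v = j, A x v =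
      #{x | c x = c u} * ∑ v with c v = j, A u v := by
  rw [sum_congr rfl fun x hx => hA x u (mem_filter.mp hx).2 j, sum_const, nsmul_eq_mul]

/-- Double counting of the entries of `A` between the cells of `u` and `w`. -/
theorem IsEquitable.card_mul_sum_fiber_comm (hAs : A.IsSymm) (hA : IsEquitable A c) (u w : α) :
    #{x | c x = c w} * ∑ v with c v = c u, A w v =
      #{x | c x = c u} * ∑ v with c v = c w, A u v := by
  rw [← hA.sum_fiber_eq_card_mul, ← hA.sum_fiber_eq_card_mul]
  refine sum_comm.trans ?_
  exact sum_congr rfl fun _ _ => sum_congr rfl fun _ _ => hAs.apply _ _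

theorem IsEquitable.fiberAvg_mul_comm (hAs : A.IsSymm) (hA : IsEquitable A c) :
    fiberAvg c * A = A * fiberAvg c := by
  ext u w
  have hcard : ∀ x, (0 : ℝ) < #{y | c y = c x} := fun x => by
    exact_mod_cast card_pos.mpr ⟨x, by simp⟩
  have hleft : (fiberAvg c * A) u w = (#{x | c x = c u} : ℝ)⁻¹ * ∑ v with c v = c u, A w v := by
    simp only [Matrix.mul_apply, ← hAs.apply w, sum_fiberAvg_mul]
  have hright : (A * fiberAvg c) u w =
      (#{x | c x = c w} : ℝ)⁻¹ * ∑ v with c v = c w, A u v := by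
    simp only [Matrix.mul_apply, fiberAvg_comm c _ w, mul_comm (A u _), sum_fiberAvg_mul]
  rw [hleft, hright]
  field_simp [(hcard u).ne', (hcard w).ne']
  linear_combination hA.card_mul_sum_fiber_comm hAs u w

end Equitable

end FiberPartition

theorem balanced_weightEquitable_implies_fractionally_isomorphic_general
    {V W : Type*} [Fintype V] [Fintype W]
    (G : SimpleGraph V) (H : SimpleGraph W)
    [DecidableRel (G ⊕g H).Adj]
    (ν : V ⊕ W → ℝ)
    (hν : ∀ x, 0 < ν x)
    {m : ℕ} (Vc : Fin m → Finset (V ⊕ W))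
    (hpart : IsPartitionC Vc)
    (hWE : IsWeightEquitableC (G ⊕g H) ν Vc)
    (hbal : ∀ i : Fin m, (∃ u : V, Sum.inl u ∈ Vc i) ∧ (∃ w : W, Sum.inr w ∈ Vc i))
    (hconst : ∀ i : Fin m, ∀ x ∈ Vc i, ∀ y ∈ Vc i, ν x = ν y) :
    ∃ X Y : Matrix (V ⊕ W) (V ⊕ W) ℝ,
      IsDoublyStochastic X ∧ IsDoublyStochastic Y ∧
      X * (G ⊕g H).adjMatrix ℝ = (G ⊕g H).adjMatrix ℝ * Y ∧
      (∀ v : V, ∃ w : W, X (Sum.inl v) (Sum.inr w) ≠ 0) ∧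
      (∀ w : W, ∃ v : V, X (Sum.inr w) (Sum.inl v) ≠ 0) ∧
      (∀ v : V, ∃ w : W, Y (Sum.inl v) (Sum.inr w) ≠ 0) ∧
      (∀ w : W, ∃ v : V, Y (Sum.inr w) (Sum.inl v) ≠ 0) := by
  obtain ⟨c, rfl⟩ := hpart.exists_eq_fiber
  have hEq : IsEquitable ((G ⊕g H).adjMatrix ℝ) c :=
    isEquitable_adjMatrix_of_isWeightEquitableC _ (fun x => (hν x).ne') c hWE
      fun x y hxy => hconst (c x) x (by simp) y (by simp [hxy])
  have hVW : ∀ v : V, ∃ w : W, fiberAvg c (Sum.inl v) (Sum.inr w) ≠ 0 := fun v => by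
    obtain ⟨-, w, hw⟩ := hbal (c (Sum.inl v))
    exact ⟨w, fiberAvg_apply_ne_zero (mem_filter.mp hw).2.symm⟩
  have hWV : ∀ w : W, ∃ v : V, fiberAvg c (Sum.inr w) (Sum.inl v) ≠ 0 := fun w => by
    obtain ⟨⟨v, hv⟩, -⟩ := hbal (c (Sum.inr w))
    exact ⟨v, fiberAvg_apply_ne_zero (mem_filter.mp hv).2.symm⟩
  exact ⟨_, _, isDoublyStochastic_fiberAvg c, isDoublyStochastic_fiberAvg c,
    hEq.fiberAvg_mul_comm (G ⊕g H).isSymm_adjMatrix, hVW, hWV, hVW, hWV⟩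

/-- If `G` and `H` have a balanced weight-equitable joint partition on which the weight
`ν` is constant on each cell, then their adjacency matrices are fractionally
isomorphic. -/
theorem balanced_weightEquitable_implies_fractionally_isomorphic
    {V W : Type*} [Fintype V] [Fintype W] [DecidableEq V] [DecidableEq W]
    (G : SimpleGraph V) (H : SimpleGraph W)
    [DecidableRel G.Adj] [DecidableRel H.Adj] [DecidableRel (G ⊕g H).Adj]
    (ν : V ⊕ W → ℝ) (lam : ℝ)
    (hν : ∀ x, 0 < ν x)
    (heig : ((G ⊕g H).adjMatrix ℝ).mulVec ν = lam • ν)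
    {m : ℕ} (Vc : Fin m → Finset (V ⊕ W))
    (hpart : IsPartitionC Vc)
    (hWE : IsWeightEquitableC (G ⊕g H) ν Vc)
    (hbal : ∀ i : Fin m, (∃ u : V, Sum.inl u ∈ Vc i) ∧ (∃ w : W, Sum.inr w ∈ Vc i))
    (hconst : ∀ i : Fin m, ∀ x ∈ Vc i, ∀ y ∈ Vc i, ν x = ν y) :
    ∃ X Y : Matrix (V ⊕ W) (V ⊕ W) ℝ,
      IsDoublyStochastic X ∧ IsDoublyStochastic Y ∧
      X * (G ⊕g H).adjMatrix ℝ = (G ⊕g H).adjMatrix ℝ * Y ∧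
      (∀ v : V, ∃ w : W, X (Sum.inl v) (Sum.inr w) ≠ 0) ∧
      (∀ w : W, ∃ v : V, X (Sum.inr w) (Sum.inl v) ≠ 0) ∧
      (∀ v : V, ∃ w : W, Y (Sum.inl v) (Sum.inr w) ≠ 0) ∧
      (∀ w : W, ∃ v : V, Y (Sum.inr w) (Sum.inl v) ≠ 0) :=
  balanced_weightEquitable_implies_fractionally_isomorphic_general G H ν hν Vc hpart hWE hbal hconst
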